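/- arXiv:1011.5920 — 2 statements merged into one kernel-verified Lean document; each statement's English description precedes it below -/
import Mathlib

section
/- Theorem 1, sharpness: Let 0 < X ≤ Y, let D = {p : E² | p 0 ∈ [0,X] ∧ p 1 ∈ [0,Y]}, and let S = {p : E² | p 0 ∈ [0,X] ∧ p 1 ∈ [0, Y/2]} be the lower half-rectangle obtained by a cut parallel to the side of length X. Then S is compact, connected and regular closed, volume S = X·Y/2, and its free perimeter relative to D equals X: μH[1](frontier S \ frontier D) = X. Consequently the minimum free perimeter of a half-area shape in the rectangle is exactly X. -/
open MeasureTheory Set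

/-!
The half-rectangle and the rectangle are products of intervals, so their interiors, closures
and areas are computed one coordinate at a time. The part of the boundary of `S` that is not on
the boundary of `D` is the cut `(0, X) × {Y/2}`, an isometric copy of the interval `(0, X)`,
whose one-dimensional Hausdorff measure is therefore its length `X`.
-/

namespace EuclideanSpace

variable {ι : Type*}

def setPi (s : ι → Set ℝ) : Set (EuclideanSpace ℝ ι) := WithLp.ofLp ⁻¹' univ.pi s

variable (s : ι → Set ℝ)

lemma setPi_eq_preimage_homeomorph :
    setPi s = PiLp.homeomorph 2 (fun _ : ι => ℝ) ⁻¹' univ.pi s := rfl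

lemma mem_setPi {p : EuclideanSpace ℝ ι} : p ∈ setPi s ↔ ∀ i, p i ∈ s i := by
  simp [setPi]

lemma closure_setPi : closure (setPi s) = setPi fun i => closure (s i) := by
  rw [setPi_eq_preimage_homeomorph, ← Homeomorph.preimage_closure, closure_pi_set]
  rfl

lemma interior_setPi [Finite ι] : interior (setPi s) = setPi fun i => interior (s i) := by
  rw [setPi_eq_preimage_homeomorph, ← Homeomorph.preimage_interior, interior_pi_set finite_univ]
  rfl

lemma volume_setPi [Fintype ι] : volume (setPi s) = ∏ i, volume (s i) := by
  rw [← volume_pi_pi, ← (volume_preserving_symm_measurableEquiv_toLp ι).measure_preimage_equiv]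
  rfl

variable {s}

lemma isCompact_setPi (h : ∀ i, IsCompact (s i)) : IsCompact (setPi s) :=
  (PiLp.homeomorph 2 _).isCompact_preimage.2 (isCompact_univ_pi h)

lemma convex_setPi (h : ∀ i, Convex ℝ (s i)) : Convex ℝ (setPi s) :=
  (convex_pi fun i _ => h i).linear_preimage (EuclideanSpace.equiv ι ℝ).toLinearMap

lemma setPi_mono {t : ι → Set ℝ} (h : ∀ i, s i ⊆ t i) : setPi s ⊆ setPi t :=
  preimage_mono (pi_mono fun i _ => h i)

lemma closure_interior_setPi [Finite ι] (h : ∀ i, closure (interior (s i)) = s i) :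
    closure (interior (setPi s)) = setPi s := by
  simp only [interior_setPi, closure_setPi, h]

lemma setPi_fin_two (s t : Set ℝ) : setPi ![s, t] = {p | p 0 ∈ s ∧ p 1 ∈ t} := by
  ext p
  simp [mem_setPi, Fin.forall_fin_two]

end EuclideanSpace

open EuclideanSpace

lemma frontier_diff_frontier_eq_inter_interior {X : Type*} [TopologicalSpace X] {s t : Set X}
    (hs : IsClosed s) (ht : IsClosed t) (hst : s ⊆ t) :
    frontier s \ frontier t = frontier s ∩ interior t := by
  rw [ht.frontier_eq, sdiff_sdiff_right, sdiff_eq_empty.2 (hs.frontier_subset.trans hst),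
    empty_union]

lemma isometry_horizontal_line (c : ℝ) : Isometry fun t : ℝ => !₂[t, c] :=
  Isometry.of_dist_eq fun s t => by
    simp [EuclideanSpace.dist_eq, Fin.sum_univ_two, Real.dist_eq, Real.sqrt_sq_eq_abs]

lemma hausdorffMeasure_one_horizontal (s : Set ℝ) (c : ℝ) :
    μH[1] {p : EuclideanSpace ℝ (Fin 2) | p 0 ∈ s ∧ p 1 = c} = volume s := by
  have hline : {p : EuclideanSpace ℝ (Fin 2) | p 0 ∈ s ∧ p 1 = c} = (fun t => !₂[t, c]) '' s := by
    ext p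
    constructor
    · rintro ⟨h0, h1⟩
      refine ⟨p 0, h0, ?_⟩
      ext i
      fin_cases i <;> simp [h1]
    · rintro ⟨t, ht, rfl⟩
      simpa using ht
  rw [hline, (isometry_horizontal_line c).hausdorffMeasure_image (Or.inl zero_le_one),
    hausdorffMeasure_real]

lemma frontier_lower_rect_inter_interior_rect {a c d : ℝ} (hc : 0 < c) (hcd : c < d) :
    frontier (setPi ![Icc 0 a, Icc 0 c]) ∩ interior (setPi ![Icc 0 a, Icc 0 d]) =
      {p | p 0 ∈ Ioo 0 a ∧ p 1 = c} := by
  have hclosed : IsClosed (setPi ![Icc 0 a, Icc 0 c]) :=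
    (isCompact_setPi (by simp [Fin.forall_fin_two, isCompact_Icc])).isClosed
  ext p
  simp only [hclosed.frontier_eq, interior_setPi, mem_inter_iff, mem_sdiff, mem_setPi,
    Fin.forall_fin_two, Matrix.cons_val_zero, Matrix.cons_val_one, interior_Icc, mem_Icc, mem_Ioo,
    mem_ofPred_eq]
  constructor
  · rintro ⟨⟨⟨-, -, hp1⟩, hnot⟩, hp0, hp1', -⟩
    exact ⟨hp0, le_antisymm hp1 (not_lt.1 fun h => hnot ⟨hp0, hp1', h⟩)⟩
  · rintro ⟨hp0, rfl⟩
    exact ⟨⟨⟨⟨hp0.1.le, hp0.2.le⟩, hc.le, le_rfl⟩, fun h => lt_irrefl _ h.2.2⟩, hp0, hc, hcd⟩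

/-- **Theorem 1, sharpness.**
Let `0 < X ≤ Y`, `D` the closed `X × Y` rectangle, and `S` the lower
half-rectangle obtained by a cut parallel to the side of length `X`.  Then `S`
is compact, connected and regular closed, has area `X·Y/2`, and its free
perimeter relative to `D` equals `X`; hence the minimum free perimeter of a
half-area shape in the rectangle is exactly `X`. -/
theorem half_area_free_perimeter_sharp
    (X Y : ℝ) (hX : 0 < X) (hXY : X ≤ Y)
    (D S : Set (EuclideanSpace ℝ (Fin 2)))
    (hD : D = {p : EuclideanSpace ℝ (Fin 2) | p 0 ∈ Set.Icc 0 X ∧ p 1 ∈ Set.Icc 0 Y})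
    (hS : S = {p : EuclideanSpace ℝ (Fin 2) | p 0 ∈ Set.Icc 0 X ∧ p 1 ∈ Set.Icc 0 (Y / 2)}) :
    IsCompact S ∧ IsConnected S ∧ S = closure (interior S) ∧
      volume S = ENNReal.ofReal (X * Y / 2) ∧
      μH[1] (frontier S \ frontier D) = ENNReal.ofReal X := by
  have hhalf : 0 < Y / 2 := by linarith
  rw [← setPi_fin_two] at hD hS
  subst hD hS
  have hcompact (b : ℝ) : IsCompact (setPi ![Icc 0 X, Icc 0 b]) :=
    isCompact_setPi (by simp [Fin.forall_fin_two, isCompact_Icc])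
  have hsub : setPi ![Icc 0 X, Icc 0 (Y / 2)] ⊆ setPi ![Icc 0 X, Icc 0 Y] :=
    setPi_mono <| Fin.forall_fin_two.2 ⟨subset_rfl, Icc_subset_Icc_right (by linarith)⟩
  refine ⟨hcompact _, ⟨?_, ?_⟩, (closure_interior_setPi ?_).symm, ?_, ?_⟩
  · exact ⟨0, by simp [mem_setPi, Fin.forall_fin_two, hX.le, hhalf.le]⟩
  · exact (convex_setPi (by simp [Fin.forall_fin_two, convex_Icc])).isPreconnected
  · simp [Fin.forall_fin_two, hX.ne, hhalf.ne]
  · rw [volume_setPi, Fin.prod_univ_two]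
    simp [Real.volume_Icc, ← ENNReal.ofReal_mul hX.le, mul_div_assoc]
  · rw [frontier_diff_frontier_eq_inter_interior (hcompact _).isClosed (hcompact _).isClosed hsub,
      frontier_lower_rect_inter_interior_rect hhalf (by linarith), hausdorffMeasure_one_horizontal,
      Real.volume_Ioo, sub_zero]
end

section
/- Theorem 2, sharpness: Let 0 < X ≤ Y and let D = {p : E² | p 0 ∈ [0,X] ∧ p 1 ∈ [0,Y]}. For every real A with 0 < A ≤ X·Y/2 there exists a compact, connected, regular closed set S ⊆ D with volume S = A whose free perimeter relative to D equals min X (√(π·A)): μH[1](frontier S \ frontier D) = min X (√(π·A)). (For A ≥ X²/π a rectangular strip of width A/X achieves X; for A ≤ X²/π a quarter disc of radius 2√(A/π) at a corner achieves √(π·A).) -/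
/-!
Both competitors are convex, which makes them compact, connected and regular closed. For
`√(πA) ≥ X` the free boundary of the strip `[0, X] × [0, A/X]` is its top side, of length `X`.
For `√(πA) ≤ X` the quarter disc of radius `r = 2√(πA)/π` at the origin has area `πr²/4 = A`
(two reflections cut the disc into four congruent pieces) and free boundary a quarter circle of
length `πr/2 = √(πA)`. That length is bounded above by the Lipschitz constant `r` of the polar
parametrization and below by inscribed polygons: a connected set has `μH[1]` at least the distance
between any two of its points, so an injective arc carries at least the sum of its chords, and
`n · 2r sin(π/(4n)) → πr/2`.
-/

open MeasureTheory Set Metric Filter Topology Real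
open scoped ENNReal RealInnerProductSpace

section MetricSpace

variable {X : Type*} [MetricSpace X] [MeasurableSpace X] [BorelSpace X]

theorem ofReal_dist_le_hausdorffMeasure_of_isPreconnected {s : Set X} (hs : IsPreconnected s)
    {x y : X} (hx : x ∈ s) (hy : y ∈ s) : ENNReal.ofReal (dist x y) ≤ μH[1] s := by
  have hIcc : Icc 0 (dist x y) ⊆ dist x '' s :=
    (hs.image _ (continuous_const.dist continuous_id).continuousOn).Icc_subset
      ⟨x, hx, dist_self x⟩ ⟨y, hy, rfl⟩
  calc ENNReal.ofReal (dist x y) = μH[1] (Icc 0 (dist x y)) := by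
        rw [hausdorffMeasure_real, Real.volume_Icc, sub_zero]
    _ ≤ μH[1] (dist x '' s) := measure_mono hIcc
    _ ≤ μH[1] s := by
        simpa using (LipschitzWith.dist_right x).hausdorffMeasure_image_le zero_le_one s

theorem sum_dist_le_hausdorffMeasure_image {γ : ℝ → X} {a b : ℝ} (hγ : ContinuousOn γ (Icc a b))
    (hinj : InjOn γ (Icc a b)) {t : ℕ → ℝ} (ht : Monotone t) {n : ℕ} (ha : a ≤ t 0)
    (hb : t n ≤ b) :
    ∑ i ∈ Finset.range n, ENNReal.ofReal (dist (γ (t i)) (γ (t (i + 1)))) ≤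
      μH[1] (γ '' Icc a b) := by
  have : NullSingletonClass (μH[1] : Measure X) := Measure.nullSingletonClass_hausdorff X one_pos
  have hsub : ∀ i ∈ Finset.range n, Icc (t i) (t (i + 1)) ⊆ Icc a b := fun i hi =>
    Icc_subset_Icc (ha.trans (ht (Nat.zero_le i)))
      ((ht (Finset.mem_range.1 hi)).trans hb)
  have hpiece : ∀ i ∈ Finset.range n, ENNReal.ofReal (dist (γ (t i)) (γ (t (i + 1)))) ≤
      μH[1] (γ '' Ico (t i) (t (i + 1))) := by
    intro i hi
    have hle : t i ≤ t (i + 1) := ht i.le_succ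
    calc ENNReal.ofReal (dist (γ (t i)) (γ (t (i + 1))))
        ≤ μH[1] (γ '' Icc (t i) (t (i + 1))) :=
          ofReal_dist_le_hausdorffMeasure_of_isPreconnected
            (isPreconnected_Icc.image γ (hγ.mono (hsub i hi)))
            (mem_image_of_mem γ (left_mem_Icc.2 hle)) (mem_image_of_mem γ (right_mem_Icc.2 hle))
      _ = μH[1] (γ '' Ico (t i) (t (i + 1))) := by
          rw [← Ico_insert_right hle, image_insert_eq, measure_congr (insert_ae_eq_self _ _)]
  have hmeas : ∀ i ∈ Finset.range n, MeasurableSet (γ '' Ico (t i) (t (i + 1))) := by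
    intro i hi
    rw [← Icc_sdiff_right, (hinj.mono (hsub i hi)).image_sdiff, inter_eq_right.2
      (singleton_subset_iff.2 (right_mem_Icc.2 (ht i.le_succ))), image_singleton]
    exact (isCompact_Icc.image_of_continuousOn (hγ.mono (hsub i hi))).isClosed.measurableSet.diff
      (measurableSet_singleton _)
  have hdisj : (↑(Finset.range n) : Set ℕ).PairwiseDisjoint
      fun i => γ '' Ico (t i) (t (i + 1)) := by
    intro i hi j hj hij
    have hIco : ∀ k ∈ Finset.range n, Ico (t k) (t (k + 1)) ⊆ Icc a b := fun k hk =>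
      Ico_subset_Icc_self.trans (hsub k hk)
    rw [Function.onFun, disjoint_iff_inter_eq_empty, ← hinj.image_inter (hIco i hi) (hIco j hj)]
    exact image_eq_empty.2 (ht.pairwise_disjoint_on_Ico_succ hij).inter_eq
  calc ∑ i ∈ Finset.range n, ENNReal.ofReal (dist (γ (t i)) (γ (t (i + 1))))
      ≤ ∑ i ∈ Finset.range n, μH[1] (γ '' Ico (t i) (t (i + 1))) := Finset.sum_le_sum hpiece
    _ = μH[1] (⋃ i ∈ Finset.range n, γ '' Ico (t i) (t (i + 1))) :=
        (measure_biUnion_finset hdisj hmeas).symm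
    _ ≤ μH[1] (γ '' Icc a b) := measure_mono <| iUnion₂_subset fun i hi =>
        image_mono (Ico_subset_Icc_self.trans (hsub i hi))

end MetricSpace

theorem frontier_sdiff_frontier_of_subset {X : Type*} [TopologicalSpace X] {s t : Set X}
    (hst : s ⊆ t) : frontier s \ frontier t = frontier s ∩ interior t := by
  ext x
  simp only [frontier, Set.mem_sdiff, mem_inter_iff, not_and, not_not]
  exact ⟨fun ⟨hs, ht⟩ => ⟨hs, ht (closure_mono hst hs.1)⟩, fun ⟨hs, ht⟩ => ⟨hs, fun _ => ht⟩⟩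

theorem Convex.eq_closure_interior {E : Type*} [AddCommGroup E] [Module ℝ E] [TopologicalSpace E]
    [IsTopologicalAddGroup E] [ContinuousSMul ℝ E] {s : Set E} (hs : Convex ℝ s)
    (hc : IsClosed s) (hi : (interior s).Nonempty) : s = closure (interior s) :=
  ((hs.closure_interior_eq_closure_of_nonempty_interior hi).trans hc.closure_eq).symm

theorem Submodule.inner_reflection_left {E : Type*} [NormedAddCommGroup E] [InnerProductSpace ℝ E]
    (K : Submodule ℝ E) [K.HasOrthogonalProjection] (u x : E) :
    ⟪K.reflection u, x⟫ = ⟪u, K.reflection x⟫ := by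
  rw [← K.reflection.inner_map_map, K.reflection_reflection]

section Reflection

variable {E : Type*} [NormedAddCommGroup E] [InnerProductSpace ℝ E]

theorem inner_reflection_orthogonal_singleton (v x : E) :
    ⟪v, (ℝ ∙ v)ᗮ.reflection x⟫ = -⟪v, x⟫ := by
  rw [← Submodule.inner_reflection_left, Submodule.reflection_orthogonalComplement_singleton_eq_neg,
    inner_neg_left]

variable [FiniteDimensional ℝ E] [MeasurableSpace E] [BorelSpace E]

theorem two_mul_volume_inter_inner_nonneg {v : E} (hv : v ≠ 0) {s : Set E} (hs : MeasurableSet s)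
    (hsymm : (ℝ ∙ v)ᗮ.reflection ⁻¹' s = s) :
    2 * volume (s ∩ {x | 0 ≤ ⟪v, x⟫}) = volume s := by
  set R := (ℝ ∙ v)ᗮ.reflection
  have hmeas_pos : MeasurableSet (s ∩ {x | 0 ≤ ⟪v, x⟫}) :=
    hs.inter (measurableSet_le measurable_const (measurable_const.inner measurable_id))
  have hmeas_neg : MeasurableSet (s ∩ {x | ⟪v, x⟫ ≤ 0}) :=
    hs.inter (measurableSet_le (measurable_const.inner measurable_id) measurable_const)
  have hflip : R ⁻¹' (s ∩ {x | 0 ≤ ⟪v, x⟫}) = s ∩ {x | ⟪v, x⟫ ≤ 0} := by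
    ext x
    simp [preimage_inter, hsymm, R, inner_reflection_orthogonal_singleton]
  have hcover : s ∩ {x | 0 ≤ ⟪v, x⟫} ∪ s ∩ {x | ⟪v, x⟫ ≤ 0} = s := by
    rw [← inter_union_distrib_left, inter_eq_left]
    exact fun x _ => le_total 0 ⟪v, x⟫
  have hhyperplane : volume (s ∩ {x | 0 ≤ ⟪v, x⟫} ∩ (s ∩ {x | ⟪v, x⟫ ≤ 0})) = 0 := by
    refine measure_mono_null (fun x hx => ?_) (Measure.addHaar_submodule volume (ℝ ∙ v)ᗮ ?_)
    · exact Submodule.mem_orthogonal_singleton_iff_inner_right.2 (le_antisymm hx.2.2 hx.1.2)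
    · exact fun htop => hv (inner_self_eq_zero.1
        (Submodule.mem_orthogonal_singleton_iff_inner_right.1 (htop ▸ Submodule.mem_top)))
  have := measure_union_add_inter (μ := volume) (s ∩ {x | 0 ≤ ⟪v, x⟫}) hmeas_neg
  rw [hcover, hhyperplane, add_zero, ← hflip,
    R.measurePreserving.measure_preimage hmeas_pos.nullMeasurableSet] at this
  rw [this, two_mul]

end Reflection

theorem EuclideanSpace.apply_le_norm {ι : Type*} [Fintype ι] (p : EuclideanSpace ℝ ι) (i : ι) :
    p i ≤ ‖p‖ :=
  (Real.le_norm_self _).trans (PiLp.norm_apply_le p i)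

local notation "ℝ²" => EuclideanSpace ℝ (Fin 2)

noncomputable def planeToProd : ℝ² ≃L[ℝ] ℝ × ℝ :=
  (EuclideanSpace.equiv (Fin 2) ℝ).trans (ContinuousLinearEquiv.finTwoArrow ℝ ℝ)

theorem measurePreserving_planeToProd : MeasurePreserving planeToProd :=
  (volume_preserving_finTwoArrow ℝ).comp (PiLp.volume_preserving_ofLp _)

theorem norm_eq_sqrt_sq_add_sq (p : ℝ²) : ‖p‖ = √(p 0 ^ 2 + p 1 ^ 2) := by
  rw [← sqrt_sq (norm_nonneg p), EuclideanSpace.real_norm_sq_eq, Fin.sum_univ_two]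

def cornerRect (a b : ℝ) : Set ℝ² := {p | p 0 ∈ Icc 0 a ∧ p 1 ∈ Icc 0 b}

theorem cornerRect_eq_preimage (a b : ℝ) :
    cornerRect a b = planeToProd ⁻¹' (Icc 0 a ×ˢ Icc 0 b) := rfl

theorem cornerRect_subset_cornerRect {a a' b b' : ℝ} (ha : a ≤ a') (hb : b ≤ b') :
    cornerRect a b ⊆ cornerRect a' b' :=
  fun _ hp => ⟨Icc_subset_Icc_right ha hp.1, Icc_subset_Icc_right hb hp.2⟩

theorem isCompact_cornerRect (a b : ℝ) : IsCompact (cornerRect a b) :=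
  planeToProd.toHomeomorph.isCompact_preimage.2 (isCompact_Icc.prod isCompact_Icc)

theorem convex_cornerRect (a b : ℝ) : Convex ℝ (cornerRect a b) := by
  rw [cornerRect_eq_preimage]
  exact ((convex_Icc 0 a).prod (convex_Icc 0 b)).linear_preimage planeToProd.toLinearMap

theorem interior_cornerRect (a b : ℝ) :
    interior (cornerRect a b) = {p | p 0 ∈ Ioo 0 a ∧ p 1 ∈ Ioo 0 b} := by
  rw [cornerRect_eq_preimage,
    ← planeToProd.isOpenMap.preimage_interior_eq_interior_preimage planeToProd.continuous,
    interior_prod_eq, interior_Icc, interior_Icc]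
  rfl

theorem volume_cornerRect (a b : ℝ) :
    volume (cornerRect a b) = ENNReal.ofReal a * ENNReal.ofReal b := by
  rw [cornerRect_eq_preimage, measurePreserving_planeToProd.measure_preimage
    (measurableSet_Icc.prod measurableSet_Icc).nullMeasurableSet, Measure.volume_eq_prod,
    Measure.prod_prod, Real.volume_Icc, Real.volume_Icc, sub_zero, sub_zero]

theorem isometry_horizontal (h : ℝ) : Isometry fun t : ℝ => !₂[t, h] :=
  Isometry.of_dist_eq fun s t => by
    simp [EuclideanSpace.dist_eq, Fin.sum_univ_two, Real.dist_eq, sqrt_sq_eq_abs]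

theorem hausdorffMeasure_horizontal_segment (a h : ℝ) :
    μH[1] {p : ℝ² | p 0 ∈ Ioo 0 a ∧ p 1 = h} = ENNReal.ofReal a := by
  have himage : {p : ℝ² | p 0 ∈ Ioo 0 a ∧ p 1 = h} = (fun t : ℝ => !₂[t, h]) '' Ioo 0 a := by
    ext p
    refine ⟨fun ⟨hp0, hp1⟩ => ⟨p 0, hp0, ?_⟩, ?_⟩
    · ext i; fin_cases i <;> simp [hp1]
    · rintro ⟨t, ht, rfl⟩; simpa using ht
  rw [himage, (isometry_horizontal h).hausdorffMeasure_image (Or.inl zero_le_one),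
    hausdorffMeasure_real, Real.volume_Ioo, sub_zero]

theorem frontier_cornerRect_inter_interior {a b h : ℝ} (hh : 0 < h) (hhb : h < b) :
    frontier (cornerRect a h) ∩ interior (cornerRect a b) = {p | p 0 ∈ Ioo 0 a ∧ p 1 = h} := by
  rw [(isCompact_cornerRect a h).isClosed.frontier_eq, interior_cornerRect, interior_cornerRect]
  ext p
  simp only [cornerRect, mem_inter_iff, Set.mem_sdiff, mem_ofPred_eq, mem_Icc, mem_Ioo]
  constructor
  · rintro ⟨⟨⟨-, -, hp1⟩, hnot⟩, hp0, hp1pos, -⟩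
    exact ⟨hp0, le_antisymm hp1 (not_lt.1 fun hlt => hnot ⟨hp0, hp1pos, hlt⟩)⟩
  · rintro ⟨hp0, hp1⟩
    rw [hp1]
    exact ⟨⟨⟨⟨hp0.1.le, hp0.2.le⟩, hh.le, le_rfl⟩, fun hin => hin.2.2.false⟩, hp0, hh, hhb⟩

def quarterDisc (r : ℝ) : Set ℝ² := closedBall 0 r ∩ {p | 0 ≤ p 0 ∧ 0 ≤ p 1}

theorem quarterDisc_eq_preimage (r : ℝ) :
    quarterDisc r = closedBall 0 r ∩ planeToProd ⁻¹' (Ici 0 ×ˢ Ici 0) := rfl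

theorem quarterDisc_subset_cornerRect {r a b : ℝ} (ha : r ≤ a) (hb : r ≤ b) :
    quarterDisc r ⊆ cornerRect a b := by
  rintro p ⟨hp, h0, h1⟩
  have hnorm : ‖p‖ ≤ r := mem_closedBall_zero_iff.1 hp
  exact ⟨⟨h0, (p.apply_le_norm 0).trans (hnorm.trans ha)⟩,
    ⟨h1, (p.apply_le_norm 1).trans (hnorm.trans hb)⟩⟩

theorem isCompact_quarterDisc (r : ℝ) : IsCompact (quarterDisc r) :=
  (isCompact_closedBall 0 r).inter_right
    ((isClosed_Ici.prod isClosed_Ici).preimage planeToProd.continuous)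

theorem convex_quarterDisc (r : ℝ) : Convex ℝ (quarterDisc r) := by
  rw [quarterDisc_eq_preimage]
  exact (convex_closedBall 0 r).inter
    (((convex_Ici 0).prod (convex_Ici 0)).linear_preimage planeToProd.toLinearMap)

theorem interior_quarterDisc {r : ℝ} (hr : r ≠ 0) :
    interior (quarterDisc r) = ball 0 r ∩ {p | 0 < p 0 ∧ 0 < p 1} := by
  rw [quarterDisc_eq_preimage, interior_inter, interior_closedBall _ hr,
    ← planeToProd.isOpenMap.preimage_interior_eq_interior_preimage planeToProd.continuous,
    interior_prod_eq, interior_Ici]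
  rfl

theorem volume_quarterDisc {r : ℝ} (hr : 0 ≤ r) :
    volume (quarterDisc r) = ENNReal.ofReal (π * r ^ 2 / 4) := by
  set e : Fin 2 → ℝ² := fun i => EuclideanSpace.single i 1
  have he : ∀ i (p : ℝ²), ⟪e i, p⟫ = p i := fun i p => by
    simp [e, EuclideanSpace.inner_single_left]
  have hQ : quarterDisc r = closedBall 0 r ∩ {p | 0 ≤ ⟪e 0, p⟫} ∩ {p | 0 ≤ ⟪e 1, p⟫} := by
    simp only [quarterDisc, he, inter_assoc, ofPred_and]
  have hhalf : 2 * volume (closedBall (0 : ℝ²) r ∩ {p | 0 ≤ ⟪e 0, p⟫}) =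
      volume (closedBall (0 : ℝ²) r) :=
    two_mul_volume_inter_inner_nonneg (by simp [e]) measurableSet_closedBall
      (by simp [LinearIsometryEquiv.preimage_closedBall])
  have hquarter : 2 * volume (quarterDisc r) =
      volume (closedBall (0 : ℝ²) r ∩ {p | 0 ≤ ⟪e 0, p⟫}) := by
    rw [hQ]
    refine two_mul_volume_inter_inner_nonneg (by simp [e])
      (measurableSet_closedBall.inter (measurableSet_le measurable_const
        (measurable_const.inner measurable_id))) ?_
    have hfix : (ℝ ∙ e 1)ᗮ.reflection (e 0) = e 0 :=
      Submodule.reflection_mem_subspace_eq_self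
        (Submodule.mem_orthogonal_singleton_iff_inner_right.2 (by rw [he]; simp [e]))
    ext p
    simp [LinearIsometryEquiv.preimage_closedBall, ← Submodule.inner_reflection_left, hfix]
  have h4 : (4 : ℝ≥0∞) * volume (quarterDisc r) = 4 * ENNReal.ofReal (π * r ^ 2 / 4) := by
    rw [show (4 : ℝ≥0∞) = 2 * 2 by norm_num, mul_assoc, hquarter, hhalf,
      EuclideanSpace.volume_closedBall_fin_two, ← ENNReal.ofReal_pow hr,
      ← ENNReal.ofReal_mul (by positivity),
      show (2 * 2 : ℝ≥0∞) = ENNReal.ofReal 4 by norm_num, ← ENNReal.ofReal_mul (by norm_num)]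
    ring_nf
  exact (ENNReal.mul_right_inj (by norm_num) (by norm_num)).1 h4

noncomputable def polarPoint (r θ : ℝ) : ℝ² := !₂[r * cos θ, r * sin θ]

theorem dist_polarPoint {r : ℝ} (hr : 0 ≤ r) (θ φ : ℝ) :
    dist (polarPoint r θ) (polarPoint r φ) = 2 * r * |sin ((θ - φ) / 2)| := by
  have hhalf : sin ((θ - φ) / 2) ^ 2 = 1 / 2 - cos (θ - φ) / 2 := by
    rw [sin_sq_eq_half_sub, show 2 * ((θ - φ) / 2) = θ - φ by ring]
  have key : (r * cos θ - r * cos φ) ^ 2 + (r * sin θ - r * sin φ) ^ 2 =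
      (2 * r * |sin ((θ - φ) / 2)|) ^ 2 := by
    rw [mul_pow, sq_abs, hhalf, cos_sub]
    linear_combination r ^ 2 * (sin_sq_add_cos_sq θ + sin_sq_add_cos_sq φ)
  rw [EuclideanSpace.dist_eq, Fin.sum_univ_two]
  simp only [polarPoint, Real.dist_eq, sq_abs, PiLp.toLp_apply, Matrix.cons_val_zero,
    Matrix.cons_val_one]
  rw [key, sqrt_sq (by positivity)]

theorem lipschitzWith_polarPoint {r : ℝ} (hr : 0 ≤ r) :
    LipschitzWith (Real.toNNReal r) (polarPoint r) :=
  LipschitzWith.of_dist_le_mul fun θ φ => by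
    rw [dist_polarPoint hr, Real.coe_toNNReal r hr, Real.dist_eq]
    calc 2 * r * |sin ((θ - φ) / 2)| ≤ 2 * r * |(θ - φ) / 2| :=
          mul_le_mul_of_nonneg_left abs_sin_le_abs (by positivity)
      _ = r * |θ - φ| := by rw [abs_div, abs_two]; ring

theorem continuous_polarPoint (r : ℝ) : Continuous (polarPoint r) := by
  unfold polarPoint; fun_prop

theorem injOn_polarPoint {r : ℝ} (hr : 0 < r) : InjOn (polarPoint r) (Icc (-(π / 2)) (π / 2)) :=
  fun θ hθ φ hφ h => injOn_sin hθ hφ <| mul_left_cancel₀ hr.ne' <| by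
    simpa [polarPoint] using congrArg (fun p : ℝ² => p 1) h

theorem hausdorffMeasure_image_polarPoint_Icc {r a b : ℝ} (hr : 0 < r) (ha : -(π / 2) ≤ a)
    (hab : a ≤ b) (hb : b ≤ π / 2) :
    μH[1] (polarPoint r '' Icc a b) = ENNReal.ofReal (r * (b - a)) := by
  refine le_antisymm ?_ ?_
  · calc μH[1] (polarPoint r '' Icc a b)
        ≤ (Real.toNNReal r : ℝ≥0∞) ^ (1 : ℝ) * μH[1] (Icc a b) :=
          (lipschitzWith_polarPoint hr.le).hausdorffMeasure_image_le zero_le_one _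
      _ = ENNReal.ofReal (r * (b - a)) := by
          rw [ENNReal.rpow_one, hausdorffMeasure_real, Real.volume_Icc, ENNReal.ofReal_mul hr.le]
          rfl
  set c := (b - a) / 2 with hc
  have hchords : ∀ n : ℕ, 0 < n →
      ENNReal.ofReal (2 * r * (c * sinc (c / n))) ≤ μH[1] (polarPoint r '' Icc a b) := by
    intro n hn
    have hn' : (n : ℝ) ≠ 0 := by positivity
    have hsinc : c * sinc (c / n) = n * sin (c / n) := by
      rcases eq_or_ne c 0 with hc0 | hc0
      · simp [hc0]
      · rw [sinc_of_ne_zero (div_ne_zero hc0 hn')]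
        field_simp
    have hpartition := sum_dist_le_hausdorffMeasure_image (continuous_polarPoint r).continuousOn
      ((injOn_polarPoint hr).mono (Icc_subset_Icc ha hb)) (t := fun i => a + i * ((b - a) / n))
      (fun i j hij => add_le_add_right (mul_le_mul_of_nonneg_right (Nat.cast_le.2 hij)
        (div_nonneg (sub_nonneg.2 hab) n.cast_nonneg)) a) (by simp) (by field_simp; linarith)
    refine le_trans ?_ hpartition
    have hchord : ∀ i : ℕ, dist (polarPoint r (a + i * ((b - a) / n)))
        (polarPoint r (a + (i + 1 : ℕ) * ((b - a) / n))) = 2 * r * |sin (c / n)| := by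
      intro i
      rw [dist_polarPoint hr.le, ← abs_neg, ← sin_neg]
      congr 3
      push_cast
      ring
    simp only [hchord, Finset.sum_const, Finset.card_range, nsmul_eq_mul, hsinc]
    rw [← ENNReal.ofReal_natCast, ← ENNReal.ofReal_mul (Nat.cast_nonneg n)]
    refine ENNReal.ofReal_le_ofReal ?_
    have := mul_le_mul_of_nonneg_left (le_abs_self (sin (c / n))) (by positivity : 0 ≤ 2 * r * n)
    linarith
  have hlim : Tendsto (fun n : ℕ => 2 * r * (c * sinc (c / n))) atTop (𝓝 (r * (b - a))) := by
    have h := ((continuous_sinc.tendsto 0).comp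
      (tendsto_const_div_atTop_nhds_zero_nat c)).const_mul (2 * r * c)
    rw [sinc_zero, mul_one] at h
    convert h using 1
    · ext n
      simp only [Function.comp_apply]
      ring
    · rw [hc]; ring_nf
  exact le_of_tendsto ((ENNReal.continuous_ofReal.tendsto _).comp hlim)
    (eventually_atTop.2 ⟨1, fun n hn => hchords n hn⟩)

theorem hausdorffMeasure_image_polarPoint_Ioo {r a b : ℝ} (hr : 0 < r) (ha : -(π / 2) ≤ a)
    (hab : a < b) (hb : b ≤ π / 2) :
    μH[1] (polarPoint r '' Ioo a b) = ENNReal.ofReal (r * (b - a)) := by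
  have : NullSingletonClass (μH[1] : Measure ℝ²) := Measure.nullSingletonClass_hausdorff _ one_pos
  rw [← hausdorffMeasure_image_polarPoint_Icc hr ha hab.le hb, ← Ico_insert_right hab.le,
    ← Ioo_insert_left hab, image_insert_eq, image_insert_eq,
    measure_congr (insert_ae_eq_self _ _), measure_congr (insert_ae_eq_self _ _)]

theorem image_polarPoint_Ioo {r : ℝ} (hr : 0 < r) :
    polarPoint r '' Ioo 0 (π / 2) = sphere 0 r ∩ {p | 0 < p 0 ∧ 0 < p 1} := by
  ext p
  constructor
  · rintro ⟨θ, hθ, rfl⟩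
    have hcos : 0 < cos θ := cos_pos_of_mem_Ioo ⟨by linarith [hθ.1, pi_pos], hθ.2⟩
    have hsin : 0 < sin θ := sin_pos_of_pos_of_lt_pi hθ.1 (by linarith [hθ.2, pi_pos])
    refine ⟨?_, mul_pos hr hcos, mul_pos hr hsin⟩
    rw [mem_sphere_zero_iff_norm, norm_eq_sqrt_sq_add_sq]
    simp only [polarPoint, PiLp.toLp_apply, Matrix.cons_val_zero, Matrix.cons_val_one]
    rw [mul_pow, mul_pow, ← mul_add, cos_sq_add_sin_sq, mul_one, sqrt_sq hr.le]
  · rintro ⟨hp, h0, h1⟩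
    have hsq : p 0 ^ 2 + p 1 ^ 2 = r ^ 2 := by
      rw [← mem_sphere_zero_iff_norm.1 hp, EuclideanSpace.real_norm_sq_eq, Fin.sum_univ_two]
    have hlt : p 0 / r < 1 := (div_lt_one hr).2 (by nlinarith)
    have hsin : sin (arccos (p 0 / r)) = p 1 / r := by
      rw [sin_arccos, ← sqrt_sq (div_pos h1 hr).le]
      congr 1
      field_simp
      linarith
    refine ⟨arccos (p 0 / r), ⟨arccos_pos.2 hlt, arccos_lt_pi_div_two.2 (div_pos h0 hr)⟩, ?_⟩
    ext i
    fin_cases i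
    · simp [polarPoint, cos_arccos (by linarith [div_pos h0 hr]) hlt.le, mul_div_cancel₀ _ hr.ne']
    · simp [polarPoint, hsin, mul_div_cancel₀ _ hr.ne']

theorem frontier_quarterDisc_inter_interior {r a b : ℝ} (hr : 0 < r) (ha : r < a) (hb : r < b) :
    frontier (quarterDisc r) ∩ interior (cornerRect a b) =
      sphere 0 r ∩ {p | 0 < p 0 ∧ 0 < p 1} := by
  rw [(isCompact_quarterDisc r).isClosed.frontier_eq, interior_quarterDisc hr.ne',
    interior_cornerRect]
  ext p
  simp only [quarterDisc, mem_inter_iff, Set.mem_sdiff, mem_ofPred_eq, mem_Ioo, mem_closedBall,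
    mem_ball, mem_sphere, not_and]
  constructor
  · rintro ⟨⟨⟨hle, -⟩, hnot⟩, ⟨h0, -⟩, h1, -⟩
    exact ⟨le_antisymm hle (not_lt.1 fun hlt => hnot hlt h0 h1), h0, h1⟩
  · rintro ⟨hp, h0, h1⟩
    have hnorm : ‖p‖ = r := by simpa using hp
    refine ⟨⟨⟨hp.le, h0.le, h1.le⟩, fun hlt => absurd hp hlt.ne⟩, ⟨h0, ?_⟩, h1, ?_⟩
    · linarith [p.apply_le_norm 0]
    · linarith [p.apply_le_norm 1]

def IsAdmissible (D S : Set ℝ²) (A L : ℝ) : Prop :=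
  S ⊆ D ∧ IsCompact S ∧ IsConnected S ∧ S = closure (interior S) ∧
    volume S = ENNReal.ofReal A ∧ μH[1] (frontier S \ frontier D) = ENNReal.ofReal L

theorem isAdmissible_of_convex {D S : Set ℝ²} {A L : ℝ} (hSD : S ⊆ D) (hconv : Convex ℝ S)
    (hcpt : IsCompact S) (hint : (interior S).Nonempty) (hvol : volume S = ENNReal.ofReal A)
    (hper : μH[1] (frontier S ∩ interior D) = ENNReal.ofReal L) : IsAdmissible D S A L :=
  ⟨hSD, hcpt, hconv.isConnected (hint.mono interior_subset),
    hconv.eq_closure_interior hcpt.isClosed hint, hvol,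
    by rwa [frontier_sdiff_frontier_of_subset hSD]⟩

theorem isAdmissible_cornerRect {a b h : ℝ} (ha : 0 < a) (hh : 0 < h) (hhb : h < b) :
    IsAdmissible (cornerRect a b) (cornerRect a h) (a * h) a := by
  refine isAdmissible_of_convex (cornerRect_subset_cornerRect le_rfl hhb.le) (convex_cornerRect a h)
    (isCompact_cornerRect a h) ⟨!₂[a / 2, h / 2], ?_⟩ ?_ ?_
  · rw [interior_cornerRect]
    simp [ha, hh]
  · rw [volume_cornerRect, ENNReal.ofReal_mul ha.le]
  · rw [frontier_cornerRect_inter_interior hh hhb, hausdorffMeasure_horizontal_segment]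

theorem isAdmissible_quarterDisc {r a b : ℝ} (hr : 0 < r) (ha : r < a) (hb : r < b) :
    IsAdmissible (cornerRect a b) (quarterDisc r) (π * r ^ 2 / 4) (r * (π / 2)) := by
  refine isAdmissible_of_convex (quarterDisc_subset_cornerRect ha.le hb.le) (convex_quarterDisc r)
    (isCompact_quarterDisc r) ⟨!₂[r / 2, r / 2], ?_⟩ (volume_quarterDisc hr.le) ?_
  · rw [interior_quarterDisc hr.ne']
    refine ⟨?_, by simp [hr]⟩
    rw [mem_ball_zero_iff, norm_eq_sqrt_sq_add_sq, sqrt_lt' hr]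
    simp only [Matrix.cons_val_zero, Matrix.cons_val_one]
    nlinarith
  · rw [frontier_quarterDisc_inter_interior hr ha hb, ← image_polarPoint_Ioo hr,
      hausdorffMeasure_image_polarPoint_Ioo hr (by linarith [pi_pos]) (by positivity) le_rfl,
      sub_zero]

/-- **Theorem 2, sharpness.**
Let `0 < X ≤ Y` and `D` the closed `X × Y` rectangle.  For every area `A` with
`0 < A ≤ X·Y/2` there exists a compact, connected, regular closed `S ⊆ D` of
area `A` whose free perimeter relative to `D` equals `min X (√(π·A))`. -/
theorem free_perimeter_sharp_small_area
    (X Y A : ℝ) (hX : 0 < X) (hXY : X ≤ Y) (hA : 0 < A) (hAhalf : A ≤ X * Y / 2)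
    (D : Set (EuclideanSpace ℝ (Fin 2)))
    (hD : D = {p : EuclideanSpace ℝ (Fin 2) | p 0 ∈ Set.Icc 0 X ∧ p 1 ∈ Set.Icc 0 Y}) :
    ∃ S : Set (EuclideanSpace ℝ (Fin 2)),
      S ⊆ D ∧ IsCompact S ∧ IsConnected S ∧ S = closure (interior S) ∧
      volume S = ENNReal.ofReal A ∧
      μH[1] (frontier S \ frontier D) =
        ENNReal.ofReal (min X (Real.sqrt (Real.pi * A))) := by
  subst hD
  rcases le_total X (√(π * A)) with hle | hle
  · have hAX : A / X < Y := by
      rw [div_lt_iff₀ hX]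
      nlinarith
    have h := isAdmissible_cornerRect hX (div_pos hA hX) hAX
    rw [mul_div_cancel₀ A hX.ne'] at h
    rw [min_eq_left hle]
    exact ⟨_, h⟩
  · set r := 2 * √(π * A) / π with hrdef
    have hr : 0 < r := by positivity
    have hrX : r < X := by
      rw [div_lt_iff₀ pi_pos]
      nlinarith [pi_gt_three]
    have h := isAdmissible_quarterDisc hr hrX (hrX.trans_le hXY)
    have harea : π * r ^ 2 / 4 = A := by
      rw [hrdef]
      field_simp
      rw [sq_sqrt (by positivity)]
      ring
    have hper : r * (π / 2) = √(π * A) := by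
      rw [hrdef]
      field_simp
    rw [harea, hper] at h
    rw [min_eq_right hle]
    exact ⟨_, h⟩
end
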